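/- arXiv:1811.02989 — 2 statements merged into one kernel-verified Lean document; each statement's English description precedes it below -/
import Mathlib

section
/- Let E be a real normed vector space, let n ≥ 1 be a natural number, and let F : ℝ → E be of class C^{n+2} with F(0) = 0. Then there exist vectors v_1, …, v_{n+1} ∈ E such that the polynomial v(r) = Σ_{k=1}^{n+1} v_k r^k satisfies n r v'(r) − r² v''(r) − F(r) = O(r^{n+2}) as r → 0⁺ if and only if F^{(n+1)}(0) = 0. In that case the coefficients v_1, …, v_n are uniquely determined, namely v_k = F^{(k)}(0)/(k! · k · (n−k+1)), while v_{n+1} may be chosen arbitrarily. -/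
/-! Since `L (r ^ k) = k (n + 1 - k) r ^ k`, the operator acts diagonally on `Σ v_k r ^ k`.
Subtracting the Taylor polynomial of `F` of degree `n + 1`, whose remainder is `O(r ^ (n + 2))`,
leaves a polynomial of degree `< n + 2`; it is `O(r ^ (n + 2))` at `0⁺` only if it vanishes,
so the estimate is equivalent to the indicial equations `k (n + 1 - k) v_k = F⁽ᵏ⁾(0) / k!`
for `1 ≤ k ≤ n + 1`. At the indicial root `k = n + 1` the left side is `0`: `v_{n+1}` is free
and `F⁽ⁿ⁺¹⁾(0)` must vanish. -/

open Filter Topology Asymptotics Finset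

/-- The model indicial operator `L u (r) = n r u'(r) - r² u''(r)`. -/
noncomputable def modelOp {E : Type*} [NormedAddCommGroup E] [NormedSpace ℝ E]
    (n : ℕ) (u : ℝ → E) : ℝ → E :=
  fun r => ((n : ℝ) * r) • deriv u r - (r ^ 2) • deriv (deriv u) r

/-- The polynomial `v(r) = Σ_{k=1}^{n+1} v_k r^k` built from the coefficients
`v_1, …, v_{n+1}`. -/
noncomputable def polySol {E : Type*} [NormedAddCommGroup E] [NormedSpace ℝ E]
    (n : ℕ) (v : ℕ → E) : ℝ → E :=
  fun r => ∑ k ∈ Icc 1 (n + 1), (r ^ k) • v k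

def indicialPoly (n : ℕ) (s : ℝ) : ℝ := s * (n - s + 1)

section
variable {E : Type*} [NormedAddCommGroup E] [NormedSpace ℝ E]

theorem sum_pow_smul_isBigO_pow_iff {m : ℕ} {c : ℕ → E} :
    (fun r : ℝ => ∑ k ∈ range m, r ^ k • c k) =O[𝓝[>] 0] (· ^ m) ↔ ∀ k < m, c k = 0 := by
  refine ⟨fun h => ?_, fun h => ?_⟩
  · induction m generalizing c with
    | zero => simp
    | succ m ih =>
      have hc0 : c 0 = 0 := by
        have hlim : Tendsto (fun r : ℝ => ∑ k ∈ range (m + 1), r ^ k • c k) (𝓝[>] 0) (𝓝 (c 0)) := by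
          have := (continuous_finsetSum (range (m + 1)) fun k _ =>
            (continuous_pow k).smul (continuous_const (y := c k))).tendsto (0 : ℝ)
          simpa [sum_range_succ'] using this.mono_left nhdsWithin_le_nhds
        refine tendsto_nhds_unique hlim (h.trans_tendsto ?_)
        simpa using ((continuous_pow (m + 1)).tendsto (0 : ℝ)).mono_left nhdsWithin_le_nhds
      have hshift : ∀ r : ℝ, ∑ k ∈ range (m + 1), r ^ k • c k
          = r • ∑ k ∈ range m, r ^ k • c (k + 1) := fun r => by
        simp [sum_range_succ', hc0, smul_sum, smul_smul, pow_succ']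
      have hpos : ∀ᶠ r : ℝ in 𝓝[>] 0, r ≠ 0 := eventually_mem_nhdsWithin.mono fun r hr => hr.ne'
      have hQ : (fun r : ℝ => ∑ k ∈ range m, r ^ k • c (k + 1)) =O[𝓝[>] 0] (· ^ m) := by
        refine ((isBigO_refl (fun r : ℝ => r⁻¹) _).smul h).congr' ?_ ?_ <;>
          filter_upwards [hpos] with r hr
        · rw [hshift, inv_smul_smul₀ hr]
        · rw [smul_eq_mul, pow_succ', inv_mul_cancel_left₀ hr]
      rintro (_ | k) hk
      · exact hc0
      · exact ih hQ k (by omega)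
  · have hzero : (fun r : ℝ => ∑ k ∈ range m, r ^ k • c k) = 0 := funext fun r =>
      sum_eq_zero fun k hk => by rw [h k (mem_range.mp hk), smul_zero]
    exact hzero ▸ isBigO_zero _ _

theorem taylor_isBigO_univ {f : ℝ → E} {x₀ : ℝ} {n : ℕ} (hf : ContDiff ℝ (n + 1 : ℕ) f) :
    (fun x => f x - taylorWithinEval f n Set.univ x₀ x) =O[𝓝 x₀] fun x => (x - x₀) ^ (n + 1) := by
  have hterm : (fun x => (((n + 1 : ℝ) * n.factorial)⁻¹ * (x - x₀) ^ (n + 1)) •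
      iteratedDerivWithin (n + 1) f Set.univ x₀) =O[𝓝 x₀] fun x => (x - x₀) ^ (n + 1) := by
    simpa using ((isBigO_refl (fun x => (x - x₀) ^ (n + 1)) _).const_mul_left _).smul
      (isBigO_const_const (c' := (1 : ℝ)) (iteratedDerivWithin (n + 1) f Set.univ x₀)
        one_ne_zero (𝓝 x₀))
  refine ((taylor_isLittleO_univ hf).isBigO.add hterm).congr_left fun x => ?_
  rw [taylorWithinEval_succ]
  abel

theorem deriv_sum_pow_smul (s : Finset ℕ) (e : ℕ → ℕ) (a : ℕ → E) :
    deriv (fun r : ℝ => ∑ k ∈ s, r ^ e k • a k)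
      = fun r => ∑ k ∈ s, r ^ (e k - 1) • ((e k : ℝ) • a k) := by
  funext r
  refine (HasDerivAt.fun_sum fun k _ => ?_).deriv
  simpa only [smul_smul, mul_comm] using (hasDerivAt_pow (e k) r).smul_const (a k)

theorem modelOp_sum_pow_smul (n : ℕ) (s : Finset ℕ) (a : ℕ → E) (r : ℝ) :
    modelOp n (fun r => ∑ k ∈ s, r ^ k • a k) r = ∑ k ∈ s, (indicialPoly n k * r ^ k) • a k := by
  have hd := deriv_sum_pow_smul s (fun k => k) a
  have hdd := deriv_sum_pow_smul s (fun k => k - 1) fun k => (k : ℝ) • a k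
  rw [modelOp, hd, hdd]
  simp only [smul_sum, ← sum_sub_distrib, smul_smul, ← sub_smul]
  refine sum_congr rfl fun k _ => congrArg (· • a k) ?_
  -- for `k ≤ 1` the truncated exponent `k - 1 - 1` is harmless: its coefficient `k (k - 1)` is `0`
  rcases k with _ | _ | k
  · simp [indicialPoly]
  · simp [indicialPoly]
  · simp only [indicialPoly, Nat.add_sub_cancel]
    push_cast
    ring

theorem modelOp_polySol_sub_taylorWithinEval (n : ℕ) (v : ℕ → E) (F : ℝ → E) (r : ℝ) :
    modelOp n (polySol n v) r - taylorWithinEval F (n + 1) Set.univ 0 r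
      = ∑ k ∈ range (n + 2),
          r ^ k • (indicialPoly n k • v k - (k.factorial : ℝ)⁻¹ • iteratedDeriv k F 0) := by
  have hsupp : ∑ k ∈ Icc 1 (n + 1), (indicialPoly n k * r ^ k) • v k
      = ∑ k ∈ range (n + 2), (indicialPoly n k * r ^ k) • v k := by
    refine sum_subset (fun k hk => ?_) fun k hk hk' => ?_
    · simp only [mem_Icc, mem_range] at hk ⊢; omega
    · obtain rfl : k = 0 := by simp only [mem_Icc, mem_range] at hk hk'; omega
      simp [indicialPoly]
  unfold polySol
  rw [modelOp_sum_pow_smul, hsupp, taylor_within_apply, ← sum_sub_distrib]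
  refine sum_congr rfl fun k _ => ?_
  rw [iteratedDerivWithin_univ, sub_zero, smul_sub, smul_smul, smul_smul, mul_comm (r ^ k),
    mul_comm (r ^ k)]

theorem isBigO_modelOp_polySol_sub_iff_indicialPoly {n : ℕ} {F : ℝ → E}
    (hF : ContDiff ℝ (n + 2) F) (hF0 : F 0 = 0) (v : ℕ → E) :
    (fun r => modelOp n (polySol n v) r - F r) =O[𝓝[>] 0] (· ^ (n + 2)) ↔
      ∀ k, 1 ≤ k → k ≤ n + 1 →
        indicialPoly n k • v k = (k.factorial : ℝ)⁻¹ • iteratedDeriv k F 0 := by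
  have hT : (fun r => F r - taylorWithinEval F (n + 1) Set.univ 0 r) =O[𝓝[>] 0] (· ^ (n + 2)) := by
    simpa only [sub_zero] using (taylor_isBigO_univ (n := n + 1) (x₀ := 0)
      (by exact_mod_cast hF)).mono (nhdsWithin_le_nhds (s := Set.Ioi 0))
  have hsplit : (fun r => modelOp n (polySol n v) r - F r) = fun r =>
      (modelOp n (polySol n v) r - taylorWithinEval F (n + 1) Set.univ 0 r)
        - (F r - taylorWithinEval F (n + 1) Set.univ 0 r) := by
    funext r; abel
  simp only [hsplit, hT.sub_iff_left, modelOp_polySol_sub_taylorWithinEval,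
    sum_pow_smul_isBigO_pow_iff, sub_eq_zero]
  refine ⟨fun h k hk1 hk2 => h k (by omega), fun h k hk => ?_⟩
  rcases k with _ | k
  · simp [indicialPoly, hF0]
  · exact h (k + 1) (by omega) (by omega)

theorem indicialPoly_smul_eq_iff {n k : ℕ} (hk1 : 1 ≤ k) (hkn : k ≤ n) (x y : E) :
    indicialPoly n k • x = (k.factorial : ℝ)⁻¹ • y ↔
      x = ((k.factorial : ℝ) * k * (n - k + 1))⁻¹ • y := by
  have hk : (0 : ℝ) < k := by exact_mod_cast hk1
  have hnk : (0 : ℝ) < n - k + 1 := by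
    have : (k : ℝ) ≤ n := by exact_mod_cast hkn
    linarith
  have hI : indicialPoly n k ≠ 0 := (mul_pos hk hnk).ne'
  have hfac : (k.factorial : ℝ) ≠ 0 := by positivity
  rw [show (k.factorial : ℝ) * k * (n - k + 1) = k.factorial * indicialPoly n k by
      rw [indicialPoly]; ring,
    eq_inv_smul_iff₀ (mul_ne_zero hfac hI), eq_inv_smul_iff₀ hfac, mul_smul]

theorem isBigO_modelOp_polySol_sub_iff {n : ℕ} {F : ℝ → E}
    (hF : ContDiff ℝ (n + 2) F) (hF0 : F 0 = 0) (v : ℕ → E) :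
    (fun r => modelOp n (polySol n v) r - F r) =O[𝓝[>] 0] (· ^ (n + 2)) ↔
      (∀ k, 1 ≤ k → k ≤ n →
        v k = ((k.factorial : ℝ) * k * (n - k + 1))⁻¹ • iteratedDeriv k F 0) ∧
      iteratedDeriv (n + 1) F 0 = 0 := by
  have hroot : indicialPoly n (n + 1 : ℕ) = 0 := by simp [indicialPoly]
  rw [isBigO_modelOp_polySol_sub_iff_indicialPoly hF hF0]
  constructor
  · intro h
    refine ⟨fun k hk1 hkn => (indicialPoly_smul_eq_iff hk1 hkn _ _).mp (h k hk1 (by omega)), ?_⟩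
    have := h (n + 1) (by omega) le_rfl
    rwa [hroot, zero_smul, eq_comm, smul_eq_zero_iff_right (by positivity)] at this
  · rintro ⟨h, hD⟩ k hk1 hk2
    rcases Nat.le_succ_iff.mp hk2 with hkn | rfl
    · exact (indicialPoly_smul_eq_iff hk1 hkn _ _).mpr (h k hk1 hkn)
    · rw [hroot, zero_smul, hD, smul_zero]

end

theorem modelOp_logfree_solvability_iff_general
    {E : Type*} [NormedAddCommGroup E] [NormedSpace ℝ E]
    (n : ℕ) (F : ℝ → E)
    (hF : ContDiff ℝ (n + 2) F) (hF0 : F 0 = 0) :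
    ((∃ v : ℕ → E,
        (fun r : ℝ => modelOp n (polySol n v) r - F r)
          =O[𝓝[>] (0 : ℝ)] fun r => r ^ (n + 2))
      ↔ iteratedDeriv (n + 1) F 0 = 0)
    ∧ (∀ v : ℕ → E,
        ((fun r : ℝ => modelOp n (polySol n v) r - F r)
          =O[𝓝[>] (0 : ℝ)] fun r => r ^ (n + 2)) →
        ∀ k, 1 ≤ k → k ≤ n →
          v k = (((k.factorial : ℝ)) * (k : ℝ) * ((n : ℝ) - (k : ℝ) + 1))⁻¹ •
            iteratedDeriv k F 0)
    ∧ (iteratedDeriv (n + 1) F 0 = 0 →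
        ∀ v : ℕ → E,
        (∀ k, 1 ≤ k → k ≤ n →
          v k = (((k.factorial : ℝ)) * (k : ℝ) * ((n : ℝ) - (k : ℝ) + 1))⁻¹ •
            iteratedDeriv k F 0) →
        (fun r : ℝ => modelOp n (polySol n v) r - F r)
          =O[𝓝[>] (0 : ℝ)] fun r => r ^ (n + 2)) := by
  have hsolve := isBigO_modelOp_polySol_sub_iff hF hF0
  refine ⟨⟨fun ⟨v, hv⟩ => ((hsolve v).mp hv).2, fun hD => ?_⟩,
    fun v hv => ((hsolve v).mp hv).1, fun hD v hv => (hsolve v).mpr ⟨hv, hD⟩⟩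
  exact ⟨_, (hsolve fun k => ((k.factorial : ℝ) * k * (n - k + 1))⁻¹ • iteratedDeriv k F 0).mpr
    ⟨fun _ _ _ => rfl, hD⟩⟩

/-- Characterization of log-free solvability for the model indicial operator:
a polynomial `v(r) = Σ_{k=1}^{n+1} v_k r^k` with `L v - F = O(r^{n+2})` exists
iff `F^{(n+1)}(0) = 0`; in that case `v_1, …, v_n` are uniquely determined by
`v_k = F^{(k)}(0)/(k!·k·(n-k+1))` while `v_{n+1}` may be chosen arbitrarily. -/
theorem modelOp_logfree_solvability_iff
    {E : Type*} [NormedAddCommGroup E] [NormedSpace ℝ E]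
    (n : ℕ) (hn : 1 ≤ n) (F : ℝ → E)
    (hF : ContDiff ℝ (n + 2) F) (hF0 : F 0 = 0) :
    ((∃ v : ℕ → E,
        (fun r : ℝ => modelOp n (polySol n v) r - F r)
          =O[𝓝[>] (0 : ℝ)] fun r => r ^ (n + 2))
      ↔ iteratedDeriv (n + 1) F 0 = 0)
    ∧ (∀ v : ℕ → E,
        ((fun r : ℝ => modelOp n (polySol n v) r - F r)
          =O[𝓝[>] (0 : ℝ)] fun r => r ^ (n + 2)) →
        ∀ k, 1 ≤ k → k ≤ n →
          v k = (((k.factorial : ℝ)) * (k : ℝ) * ((n : ℝ) - (k : ℝ) + 1))⁻¹ •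
            iteratedDeriv k F 0)
    ∧ (iteratedDeriv (n + 1) F 0 = 0 →
        ∀ v : ℕ → E,
        (∀ k, 1 ≤ k → k ≤ n →
          v k = (((k.factorial : ℝ)) * (k : ℝ) * ((n : ℝ) - (k : ℝ) + 1))⁻¹ •
            iteratedDeriv k F 0) →
        (fun r : ℝ => modelOp n (polySol n v) r - F r)
          =O[𝓝[>] (0 : ℝ)] fun r => r ^ (n + 2)) :=
  modelOp_logfree_solvability_iff_general n F hF hF0
end

section
/- Let E be a real normed vector space, let n ≥ 1 be a natural number, and let F : ℝ → E be of class C^{n+2} with F(0) = 0 and F(r) = O(r^{n+2}) as r → 0⁺. Then the unique tuple (u_1, …, u_n, p) ∈ E^{n+1} such that u(r) = Σ_{k=1}^{n} u_k r^k + p r^{n+1} log r satisfies n r u'(r) − r² u''(r) − F(r) = O(r^{n+2}) as r → 0⁺ is the zero tuple: u_1 = … = u_n = 0 and p = 0. -/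
open Filter Topology Asymptotics Finset

/-- The model solution `u(r) = Σ_{k=1}^n u_k r^k + p r^{n+1} log r` built from a
tuple of coefficients `(u_1, …, u_n, p)`. -/
noncomputable def modelSol {E : Type*} [NormedAddCommGroup E] [NormedSpace ℝ E]
    (n : ℕ) (u : ℕ → E) (p : E) : ℝ → E :=
  fun r => (∑ k ∈ Icc 1 n, (r ^ k) • u k) + (r ^ (n + 1) * Real.log r) • p

section PowerSums

variable {𝕜 E F : Type*} [NontriviallyNormedField 𝕜] [NormedAddCommGroup E] [NormedSpace 𝕜 E]
  [NormedAddCommGroup F] [NormedSpace 𝕜 F] {l : Filter 𝕜}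

theorem Asymptotics.IsBigO.of_id_smul (hl : ∀ᶠ r in l, r ≠ 0) {f : 𝕜 → E} {g : 𝕜 → F}
    (h : (fun r => r • f r) =O[l] fun r => r • g r) : f =O[l] g := by
  refine ((isBigO_refl (fun r : 𝕜 => r⁻¹) l).smul h).congr' ?_ ?_ <;>
    filter_upwards [hl] with r hr <;> simp [smul_smul, hr]

theorem sum_range_succ_pow_smul (N : ℕ) (c : ℕ → E) (r : 𝕜) :
    ∑ k ∈ range (N + 1), r ^ k • c k = c 0 + r • ∑ k ∈ range N, r ^ k • c (k + 1) := by
  simp only [sum_range_succ', pow_zero, one_smul, smul_sum, smul_smul, pow_succ']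
  abel

theorem tendsto_sum_pow_smul_nhds_zero (N : ℕ) (c : ℕ → E) :
    Tendsto (fun r : 𝕜 => ∑ k ∈ range (N + 1), r ^ k • c k) (𝓝 0) (𝓝 (c 0)) := by
  have hcont : Continuous (fun r : 𝕜 => ∑ k ∈ range (N + 1), r ^ k • c k) := by fun_prop
  simpa [sum_range_succ_pow_smul] using hcont.tendsto 0

theorem coeff_eq_zero_of_sum_pow_smul_isBigO [l.NeBot] (hl : l ≤ 𝓝[≠] 0) (N : ℕ) (c : ℕ → E)
    (h : (fun r => ∑ k ∈ range N, r ^ k • c k) =O[l] fun r => r ^ N) : ∀ k < N, c k = 0 := by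
  induction N generalizing c with
  | zero => simp
  | succ N ih =>
    have hl0 : l ≤ 𝓝 0 := hl.trans nhdsWithin_le_nhds
    have hc0 : c 0 = 0 := by
      refine tendsto_nhds_unique ((tendsto_sum_pow_smul_nhds_zero N c).mono_left hl0)
        (h.trans_tendsto ?_)
      simpa using ((continuous_pow (N + 1)).tendsto (0 : 𝕜)).mono_left hl0
    have hshift : (fun r => ∑ k ∈ range N, r ^ k • c (k + 1)) =O[l] fun r => r ^ N := by
      refine IsBigO.of_id_smul (hl self_mem_nhdsWithin) ?_
      simpa [sum_range_succ_pow_smul, hc0, pow_succ'] using h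
    rintro (_ | k) hk
    · exact hc0
    · exact ih _ hshift k (by omega)

end PowerSums

section ModelSolution

variable {E : Type*} [NormedAddCommGroup E] [NormedSpace ℝ E] (n : ℕ) (v : ℕ → E) (q : E) {r : ℝ}

theorem hasDerivAt_modelSol (hr : r ≠ 0) :
    HasDerivAt (modelSol n v q)
      ((∑ k ∈ Icc 1 n, ((k : ℝ) * r ^ (k - 1)) • v k)
        + (((n : ℝ) + 1) * (r ^ n * Real.log r) + r ^ n) • q) r := by
  have hlog : HasDerivAt (fun x => x ^ (n + 1) * Real.log x)
      (((n : ℝ) + 1) * (r ^ n * Real.log r) + r ^ n) r := by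
    refine ((hasDerivAt_pow (n + 1) r).mul (Real.hasDerivAt_log hr)).congr_deriv ?_
    field_simp
    push_cast
    ring
  exact (HasDerivAt.fun_sum fun k _ => (hasDerivAt_pow k r).smul_const (v k)).add
    (hlog.smul_const q)

theorem deriv_deriv_modelSol (hr : r ≠ 0) :
    deriv (deriv (modelSol n v q)) r
      = (∑ k ∈ Icc 1 n, ((k : ℝ) * (((k - 1 : ℕ) : ℝ) * r ^ (k - 1 - 1))) • v k)
        + (((n : ℝ) + 1) * ((n * r ^ (n - 1)) * Real.log r + r ^ n * r⁻¹)
          + n * r ^ (n - 1)) • q := by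
  have hderiv : deriv (modelSol n v q) =ᶠ[𝓝 r] fun x =>
      (∑ k ∈ Icc 1 n, ((k : ℝ) * x ^ (k - 1)) • v k)
        + (((n : ℝ) + 1) * (x ^ n * Real.log x) + x ^ n) • q := by
    filter_upwards [eventually_ne_nhds hr] with x hx
    exact (hasDerivAt_modelSol n v q hx).deriv
  rw [hderiv.deriv_eq]
  refine HasDerivAt.deriv ?_
  have hlog := (((hasDerivAt_pow n r).mul (Real.hasDerivAt_log hr)).const_mul ((n : ℝ) + 1)).add
    (hasDerivAt_pow n r)
  exact (HasDerivAt.fun_sum fun k _ =>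
    ((hasDerivAt_pow (k - 1) r).const_mul (k : ℝ)).smul_const (v k)).add (hlog.smul_const q)

noncomputable def modelOpCoeff (k : ℕ) : E :=
  if k ≤ n then ((k : ℝ) * (n + 1 - k)) • v k else (-((n : ℝ) + 1)) • q

theorem modelOp_modelSol (hr : r ≠ 0) :
    modelOp n (modelSol n v q) r = ∑ k ∈ range (n + 2), r ^ k • modelOpCoeff n v q k := by
  have hpow (k : ℕ) :
      (n * r) * (k * r ^ (k - 1)) - r ^ 2 * (k * (((k - 1 : ℕ) : ℝ) * r ^ (k - 1 - 1)))
        = r ^ k * (k * (n + 1 - k)) := by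
    rcases k with _ | _ | k <;> push_cast [Nat.add_sub_cancel, Nat.zero_sub] <;> ring
  have hlog : (n * r) * (((n : ℝ) + 1) * (r ^ n * Real.log r) + r ^ n)
      - r ^ 2 * (((n : ℝ) + 1) * ((n * r ^ (n - 1)) * Real.log r + r ^ n * r⁻¹) + n * r ^ (n - 1))
      = r ^ (n + 1) * (-((n : ℝ) + 1)) := by
    rcases n with _ | n
    · field_simp
      ring
    · push_cast [Nat.add_sub_cancel]
      field_simp
      ring
  have hcoeff : ∑ k ∈ range (n + 1), r ^ k • modelOpCoeff n v q k
      = ∑ k ∈ Icc 1 n, (r ^ k * (k * (n + 1 - k))) • v k := by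
    rw [sum_range_eq_add_Ico _ (by omega : 0 < n + 1), Ico_add_one_right_eq_Icc]
    simp only [modelOpCoeff, zero_le, if_true, CharP.cast_eq_zero, zero_mul, zero_smul, smul_zero,
      zero_add]
    refine sum_congr rfl fun k hk => ?_
    rw [if_pos (mem_Icc.mp hk).2, smul_smul]
  rw [modelOp, (hasDerivAt_modelSol n v q hr).deriv, deriv_deriv_modelSol n v q hr, sum_range_succ,
    hcoeff]
  simp only [smul_add, smul_sum, smul_smul, modelOpCoeff, Nat.not_succ_le_self, if_false]
  simp only [← hpow, ← hlog, sub_smul, sum_sub_distrib]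
  abel

end ModelSolution

theorem modelOp_vanishing_source_zero_solution_general
    {E : Type*} [NormedAddCommGroup E] [NormedSpace ℝ E]
    (n : ℕ) (F : ℝ → E)
    (hFO : F =O[𝓝[>] (0 : ℝ)] fun r => r ^ (n + 2)) :
    ((fun r : ℝ => modelOp n (modelSol n (fun _ => (0 : E)) 0) r - F r)
      =O[𝓝[>] (0 : ℝ)] fun r => r ^ (n + 2))
    ∧ (∀ (v : ℕ → E) (q : E),
        ((fun r : ℝ => modelOp n (modelSol n v q) r - F r)
          =O[𝓝[>] (0 : ℝ)] fun r => r ^ (n + 2)) →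
        (∀ k, 1 ≤ k → k ≤ n → v k = 0) ∧ q = 0) := by
  refine ⟨?_, fun v q h => ?_⟩
  · have hzero : modelSol n (fun _ => (0 : E)) 0 = 0 := by
      funext r
      simp [modelSol]
    simpa [hzero, modelOp] using hFO.neg_left
  have hL : (fun r => ∑ k ∈ range (n + 2), r ^ k • modelOpCoeff n v q k)
      =O[𝓝[>] (0 : ℝ)] fun r => r ^ (n + 2) := by
    have hop : modelOp n (modelSol n v q) =O[𝓝[>] (0 : ℝ)] fun r => r ^ (n + 2) := by
      simpa using h.add hFO
    refine hop.congr' ?_ EventuallyEq.rfl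
    filter_upwards [self_mem_nhdsWithin] with r (hr : 0 < r)
    exact modelOp_modelSol n v q hr.ne'
  have hc := coeff_eq_zero_of_sum_pow_smul_isBigO (nhdsGT_le_nhdsNE 0) (n + 2) _ hL
  refine ⟨fun k hk1 hkn => ?_, ?_⟩
  · have hk : (1 : ℝ) ≤ k ∧ (k : ℝ) ≤ n := ⟨by exact_mod_cast hk1, by exact_mod_cast hkn⟩
    have hck := hc k (by omega)
    rw [modelOpCoeff, if_pos hkn] at hck
    exact (smul_eq_zero.mp hck).resolve_left (mul_ne_zero (by linarith) (by linarith))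
  · have hcq := hc (n + 1) (by omega)
    rw [modelOpCoeff, if_neg (by omega)] at hcq
    exact (smul_eq_zero.mp hcq).resolve_left (by linarith [(n.cast_nonneg : (0 : ℝ) ≤ n)])

/-- If `F` is `C^{n+2}`, `F(0) = 0` and `F = O(r^{n+2})` as `r → 0⁺`, then the
unique tuple `(u_1, …, u_n, p)` for which
`u(r) = Σ_{k=1}^n u_k r^k + p r^{n+1} log r` satisfies
`L u - F = O(r^{n+2})` is the zero tuple: `u_1 = … = u_n = 0` and `p = 0`. -/
theorem modelOp_vanishing_source_zero_solution
    {E : Type*} [NormedAddCommGroup E] [NormedSpace ℝ E]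
    (n : ℕ) (hn : 1 ≤ n) (F : ℝ → E)
    (hF : ContDiff ℝ (n + 2) F) (hF0 : F 0 = 0)
    (hFO : F =O[𝓝[>] (0 : ℝ)] fun r => r ^ (n + 2)) :
    ((fun r : ℝ => modelOp n (modelSol n (fun _ => (0 : E)) 0) r - F r)
      =O[𝓝[>] (0 : ℝ)] fun r => r ^ (n + 2))
    ∧ (∀ (v : ℕ → E) (q : E),
        ((fun r : ℝ => modelOp n (modelSol n v q) r - F r)
          =O[𝓝[>] (0 : ℝ)] fun r => r ^ (n + 2)) →
        (∀ k, 1 ≤ k → k ≤ n → v k = 0) ∧ q = 0) :=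
  modelOp_vanishing_source_zero_solution_general n F hFO
end
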